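/- The error measure η satisfies the Lipschitz property: for all finite sets I and Î of intervals, η(Î, I) = Opt((Î \ I) ∪ (I \ Î)) ≥ |Opt(I) − Opt(Î)|. -/
import Mathlib


open scoped Classical

/-- An interval is a pair `(a, b)` of integers; it is *valid* when `a < b`. -/
abbrev Iv := ℤ × ℤ

/-- Two intervals `(a,b)` and `(c,d)` overlap if `max a c < min b d`. -/
def Overlap (i j : Iv) : Prop := max i.1 j.1 < min i.2 j.2

instance : ∀ i j : Iv, Decidable (Overlap i j) := fun _ _ => by
  unfold Overlap; infer_instance

/-- A finite set of intervals is pairwise non-overlapping. -/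
def NonOverlapping (T : Finset Iv) : Prop :=
  ∀ i ∈ T, ∀ j ∈ T, i ≠ j → ¬ Overlap i j

instance : DecidablePred NonOverlapping := fun _ => by
  unfold NonOverlapping; infer_instance

/-- `Opt S` is the maximum cardinality of a pairwise non-overlapping subset of `S`. -/
def Opt (S : Finset Iv) : ℕ :=
  (S.powerset.filter fun T => NonOverlapping T).sup Finset.card

/-- The prediction error: `η(Ihat, I) = Opt (FP ∪ FN)` where `FP = Ihat \ I` and
`FN = I \ Ihat`. -/
def eta (Ihat I : Finset Iv) : ℕ := Opt ((Ihat \ I) ∪ (I \ Ihat))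


lemma card_le_opt {S T : Finset Iv} (h : T ⊆ S) (hT : NonOverlapping T) :
    T.card ≤ Opt S :=
  Finset.le_sup (by simp [Finset.mem_filter, Finset.mem_powerset, h, hT])

lemma opt_exists (S : Finset Iv) :
    ∃ T ⊆ S, NonOverlapping T ∧ T.card = Opt S := by
  have hne : (S.powerset.filter fun T => NonOverlapping T).Nonempty :=
    ⟨∅, by simp [NonOverlapping]⟩
  obtain ⟨T, hT, hc⟩ := Finset.exists_mem_eq_sup _ hne Finset.card
  simp only [Finset.mem_filter, Finset.mem_powerset] at hT
  exact ⟨T, hT.1, hT.2, hc.symm⟩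

lemma nonoverlapping_subset {S T : Finset Iv} (h : T ⊆ S)
    (hS : NonOverlapping S) : NonOverlapping T :=
  fun i hi j hj hij => hS i (h hi) j (h hj) hij

lemma opt_tri (A B : Finset Iv) :
    Opt A ≤ Opt B + Opt ((B \ A) ∪ (A \ B)) := by
  obtain ⟨T, hTA, hT, hc⟩ := opt_exists A
  have h1 : (T ∩ B).card ≤ Opt B :=
    card_le_opt Finset.inter_subset_right (nonoverlapping_subset Finset.inter_subset_left hT)
  have h2 : (T \ B).card ≤ Opt ((B \ A) ∪ (A \ B)) := by
    refine card_le_opt ?_ (nonoverlapping_subset (Finset.sdiff_subset) hT)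
    intro x hx
    rw [Finset.mem_sdiff] at hx
    exact Finset.mem_union_right _ (Finset.mem_sdiff.mpr ⟨hTA hx.1, hx.2⟩)
  have := Finset.card_inter_add_card_sdiff T B
  omega

/-- Lipschitz property of the error measure `η`:
`η(Ihat, I) = Opt ((Ihat \ I) ∪ (I \ Ihat)) ≥ |Opt I − Opt Ihat|`. -/
theorem eta_lipschitz
    (I Ihat : Finset Iv)
    (hI : ∀ i ∈ I, i.1 < i.2) (hIhat : ∀ i ∈ Ihat, i.1 < i.2) :
    eta Ihat I = Opt ((Ihat \ I) ∪ (I \ Ihat)) ∧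
    |(Opt I : ℤ) - (Opt Ihat : ℤ)| ≤ (eta Ihat I : ℤ) := by
  refine ⟨rfl, ?_⟩
  have h1 := opt_tri I Ihat
  have h2 := opt_tri Ihat I
  rw [Finset.union_comm] at h2
  unfold eta
  rw [abs_le]
  constructor <;> push_cast <;> omega
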